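/- (Network sparsification error.) Let a network with 1-Lipschitz activations σ_i satisfying σ_i(0) = 0, weight matrices W_1,...,W_L of maximum width m, data matrix X ∈ ℝ^{n×d}, and widths k_1,...,k_L ≥ 1 be given. Then there exist diagonal sampling matrices M_1,...,M_L, each M_i having at most k_i nonzero entries, such that the sparsified outputs X̂_0^T := X^T, X̂_i^T := Π_i σ_i(W_i M_i X̂_{i−1}^T) (where Π_i is Frobenius-norm projection onto the ball of radius ‖X‖_F Π_{j≤i}‖W_j‖_2) satisfy ‖σ_L(W_L ··· σ_1(W_1 X^T)···) − X̂_L^T‖_F ≤ ‖X‖_F (Π_{i=1}^L ‖W_i‖_2) Σ_{i=1}^L (2/√k_i)·(‖W_i‖_F/‖W_i‖_2). -/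

import Mathlib

open Matrix

noncomputable def frob {α β : Type*} [Fintype α] [Fintype β] (A : Matrix α β ℝ) : ℝ :=
  Real.sqrt (∑ i, ∑ j, (A i j) ^ 2)

noncomputable def vecNorm {α : Type*} [Fintype α] (v : α → ℝ) : ℝ :=
  Real.sqrt (∑ i, (v i) ^ 2)

/-- The spectral norm of a matrix. -/
noncomputable def specNorm {α β : Type*} [Fintype α] [Fintype β] (A : Matrix α β ℝ) : ℝ :=
  sSup {r | ∃ v : β → ℝ, vecNorm v ≤ 1 ∧ r = vecNorm (A.mulVec v)}

/-- Projection onto the Frobenius-norm ball of radius `R`. -/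
noncomputable def projBall {α β : Type*} [Fintype α] [Fintype β] (R : ℝ)
    (A : Matrix α β ℝ) : Matrix α β ℝ :=
  if frob A ≤ R then A else (R / frob A) • A

/-!
Each product `W_i X̂_{i-1}` is approximated by an importance-sampled sum: `k_i` indices `l` are
drawn with probability proportional to `‖W_i[:, l]‖ ‖X̂_{i-1}[l, :]‖`, and the reweighted sample
counts form the diagonal matrix `M_i`. Maurey's argument derandomizes this: picking the samples one
at a time, some choice does no worse than the average, and the cross terms average to zero, so the
error is at most `‖W_i‖_F ‖X̂_{i-1}‖_F / √k_i`. The true outputs lie in the ball of radius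
`‖X‖_F ∏ ‖W_j‖_2`, so the projection never moves `X̂_i` away from them while it keeps `‖X̂_i‖_F`
bounded; the per-layer errors then propagate through the 1-Lipschitz activations, amplified by the
spectral norms of the later layers.
-/

open Finset
open scoped RealInnerProductSpace

section InnerProductSpace

variable {E : Type*} [NormedAddCommGroup E] [InnerProductSpace ℝ E]

theorem norm_div_norm_smul_sub_le {a b : E} {R : ℝ} (hb : ‖b‖ ≤ R) (ha : R < ‖a‖) :
    ‖(R / ‖a‖) • a - b‖ ≤ ‖a - b‖ := by
  have hR : 0 ≤ R := (norm_nonneg b).trans hb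
  have ha0 : 0 < ‖a‖ := hR.trans_lt ha
  set t := R / ‖a‖
  have ht1 : t ≤ 1 := (div_le_one ha0).2 ha.le
  have hta : t * ‖a‖ = R := div_mul_cancel₀ R ha0.ne'
  have hab : ⟪a, b⟫ ≤ t * ‖a‖ ^ 2 := by
    calc ⟪a, b⟫ ≤ ‖a‖ * ‖b‖ := real_inner_le_norm a b
      _ ≤ ‖a‖ * R := by gcongr
      _ = t * ‖a‖ ^ 2 := by rw [← hta]; ring
  rw [← sq_le_sq₀ (norm_nonneg _) (norm_nonneg _), norm_sub_sq_real, norm_sub_sq_real,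
    real_inner_smul_left, norm_smul, Real.norm_of_nonneg (div_nonneg hR ha0.le)]
  -- the difference of the two sides is `(1 - t) * ((1 + t) ‖a‖² - 2 ⟪a, b⟫) ≥ (1 - t)² ‖a‖²`
  nlinarith [mul_le_mul_of_nonneg_left hab (sub_nonneg.2 ht1),
    mul_nonneg (sq_nonneg (1 - t)) (sq_nonneg ‖a‖)]

variable {ι : Type*} [Fintype ι] {p : ι → ℝ}

theorem exists_le_sum_mul (hp : ∀ i, 0 ≤ p i) (hp1 : ∑ i, p i = 1) (x : ι → ℝ) :
    ∃ i, x i ≤ ∑ j, p j * x j := by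
  by_contra! h
  obtain ⟨i, -, hi⟩ := exists_lt_of_sum_lt (s := univ) (f := 0) (g := p) (by simp [hp1])
  have := sum_lt_sum (s := univ) (fun j _ => mul_le_mul_of_nonneg_left (h j).le (hp j))
    ⟨i, mem_univ i, mul_lt_mul_of_pos_left (h i) hi⟩
  rw [← sum_mul, hp1, one_mul] at this
  exact this.false

theorem sum_mul_norm_add_sub_sq (hp1 : ∑ i, p i = 1) (Z : ι → E) {T : E}
    (hT : ∑ i, p i • Z i = T) (D : E) :
    ∑ i, p i * ‖D + (Z i - T)‖ ^ 2 = ‖D‖ ^ 2 + ∑ i, p i * ‖Z i - T‖ ^ 2 := by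
  have hcentered : ∑ i, p i • (Z i - T) = 0 := by
    simp only [smul_sub, sum_sub_distrib, hT, ← sum_smul, hp1, one_smul, sub_self]
  have hcross : ∑ i, p i * ⟪D, Z i - T⟫ = 0 := by
    simp only [← real_inner_smul_right, ← inner_sum, hcentered, inner_zero_right]
  simp only [norm_add_sq_real, mul_add, sum_add_distrib, ← sum_mul, hp1, one_mul,
    mul_left_comm _ (2 : ℝ), ← mul_sum, hcross, mul_zero, add_zero]

theorem exists_norm_sum_sub_sq_le (hp : ∀ i, 0 ≤ p i) (hp1 : ∑ i, p i = 1) (Z : ι → E) {T : E}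
    (hT : ∑ i, p i • Z i = T) (k : ℕ) :
    ∃ s : Fin k → ι, ‖∑ t, (Z (s t) - T)‖ ^ 2 ≤ k * ∑ i, p i * ‖Z i‖ ^ 2 := by
  have hvar : ∑ i, p i * ‖Z i - T‖ ^ 2 ≤ ∑ i, p i * ‖Z i‖ ^ 2 := by
    have := sum_mul_norm_add_sub_sq hp1 Z hT T
    simp only [add_sub_cancel] at this
    rw [this]
    linarith [sq_nonneg ‖T‖]
  induction k with
  | zero => exact ⟨Fin.elim0, by simp⟩
  | succ k ih =>
    obtain ⟨s, hs⟩ := ih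
    set D := ∑ t, (Z (s t) - T)
    obtain ⟨l, hl⟩ := exists_le_sum_mul hp hp1 fun i => ‖D + (Z i - T)‖ ^ 2
    refine ⟨Fin.cons l s, ?_⟩
    rw [Fin.sum_univ_succ]
    simp only [Fin.cons_zero, Fin.cons_succ]
    calc ‖Z l - T + D‖ ^ 2 ≤ ∑ i, p i * ‖D + (Z i - T)‖ ^ 2 := by rw [add_comm]; exact hl
      _ = ‖D‖ ^ 2 + ∑ i, p i * ‖Z i - T‖ ^ 2 := sum_mul_norm_add_sub_sq hp1 Z hT D
      _ ≤ ((k + 1 : ℕ) : ℝ) * ∑ i, p i * ‖Z i‖ ^ 2 := by push_cast; linarith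

theorem exists_norm_importance_sum_sub_sq_le (V : ι → E) (hV : 0 < ∑ l, ‖V l‖) (k : ℕ) :
    ∃ s : Fin k → ι, ‖∑ t, ((∑ l, ‖V l‖) / ‖V (s t)‖) • V (s t) - (k : ℝ) • ∑ l, V l‖ ^ 2 ≤
      k * (∑ l, ‖V l‖) ^ 2 := by
  set C := ∑ l, ‖V l‖
  set p : ι → ℝ := fun l => ‖V l‖ / C
  have hp1 : ∑ l, p l = 1 := by rw [← sum_div, div_self hV.ne']
  have hmean : ∑ l, p l • (C / ‖V l‖) • V l = ∑ l, V l := by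
    refine sum_congr rfl fun l _ => ?_
    rcases eq_or_ne ‖V l‖ 0 with h | h
    · simp [norm_eq_zero.1 h]
    · rw [smul_smul, div_mul_div_cancel₀ hV.ne', div_self h, one_smul]
  have hvar : ∑ l, p l * ‖(C / ‖V l‖) • V l‖ ^ 2 = C ^ 2 := by
    rw [sq C, sum_mul]
    refine sum_congr rfl fun l _ => ?_
    rcases eq_or_ne ‖V l‖ 0 with h | h
    · simp [p, h]
    · rw [norm_smul, Real.norm_of_nonneg (div_nonneg hV.le (norm_nonneg _)),
        div_mul_cancel₀ C h, sq, ← mul_assoc, div_mul_cancel₀ _ hV.ne']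
  obtain ⟨s, hs⟩ := exists_norm_sum_sub_sq_le (fun l => div_nonneg (norm_nonneg _) hV.le) hp1
    (fun l => (C / ‖V l‖) • V l) hmean k
  refine ⟨s, ?_⟩
  rwa [hvar, sum_sub_distrib, sum_const, card_univ, Fintype.card_fin,
    ← Nat.cast_smul_eq_nsmul ℝ] at hs

end InnerProductSpace

def flatten {α β : Type*} : Matrix α β ℝ →ₗ[ℝ] EuclideanSpace ℝ (α × β) where
  toFun A := WithLp.toLp 2 fun ij => A ij.1 ij.2
  map_add' _ _ := rfl
  map_smul' _ _ := rfl

@[simp]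
theorem flatten_apply {α β : Type*} (A : Matrix α β ℝ) (ij : α × β) :
    flatten A ij = A ij.1 ij.2 :=
  rfl

section Frobenius

variable {α β γ : Type*} [Fintype α] [Fintype β] [Fintype γ]

theorem vecNorm_eq_norm (v : α → ℝ) : vecNorm v = ‖(WithLp.toLp 2 v : EuclideanSpace ℝ α)‖ := by
  simp [vecNorm, EuclideanSpace.norm_eq]

theorem frob_eq_norm_flatten (A : Matrix α β ℝ) : frob A = ‖flatten A‖ := by
  simp [frob, EuclideanSpace.norm_eq, Fintype.sum_prod_type]

theorem vecNorm_nonneg (v : α → ℝ) : 0 ≤ vecNorm v := Real.sqrt_nonneg _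

theorem vecNorm_smul (c : ℝ) (v : α → ℝ) : vecNorm (c • v) = |c| * vecNorm v := by
  rw [vecNorm_eq_norm, vecNorm_eq_norm, WithLp.toLp_smul, norm_smul, Real.norm_eq_abs]

theorem vecNorm_eq_zero {v : α → ℝ} : vecNorm v = 0 ↔ v = 0 := by
  rw [vecNorm_eq_norm, norm_eq_zero, WithLp.toLp_eq_zero]

theorem frob_nonneg (A : Matrix α β ℝ) : 0 ≤ frob A := Real.sqrt_nonneg _

theorem frob_add_le (A B : Matrix α β ℝ) : frob (A + B) ≤ frob A + frob B := by
  simpa only [frob_eq_norm_flatten, map_add] using norm_add_le _ _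

theorem frob_sum_le {ι : Type*} (s : Finset ι) (f : ι → Matrix α β ℝ) :
    frob (∑ l ∈ s, f l) ≤ ∑ l ∈ s, frob (f l) := by
  simpa only [frob_eq_norm_flatten, map_sum] using norm_sum_le _ _

theorem frob_sub_comm (A B : Matrix α β ℝ) : frob (A - B) = frob (B - A) := by
  simp only [frob_eq_norm_flatten, map_sub, norm_sub_rev]

theorem frob_smul (r : ℝ) (A : Matrix α β ℝ) : frob (r • A) = |r| * frob A := by
  rw [frob_eq_norm_flatten, frob_eq_norm_flatten, map_smul, norm_smul, Real.norm_eq_abs]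

theorem frob_transpose (A : Matrix α β ℝ) : frob Aᵀ = frob A := by
  rw [frob, frob, sum_comm]
  rfl

theorem frob_sq (A : Matrix α β ℝ) : frob A ^ 2 = ∑ j, vecNorm (Aᵀ j) ^ 2 := by
  rw [frob, Real.sq_sqrt (by positivity), sum_comm]
  exact sum_congr rfl fun j _ => (Real.sq_sqrt (by positivity)).symm

theorem frob_vecMulVec (u : α → ℝ) (v : β → ℝ) : frob (vecMulVec u v) = vecNorm u * vecNorm v := by
  rw [frob, vecNorm, vecNorm, ← Real.sqrt_mul (by positivity), sum_mul_sum]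
  simp [vecMulVec_apply, mul_pow]

theorem sum_vecNorm_mul_le_frob_mul_frob (W : Matrix α β ℝ) (A : Matrix β γ ℝ) :
    ∑ l, vecNorm (Wᵀ l) * vecNorm (A l) ≤ frob W * frob A := by
  have hW : frob W = √(∑ l, vecNorm (Wᵀ l) ^ 2) := by
    rw [← frob_sq, Real.sqrt_sq (frob_nonneg W)]
  have hA : frob A = √(∑ l, vecNorm (A l) ^ 2) := by
    rw [← Real.sqrt_sq (frob_nonneg A), ← frob_transpose, frob_sq]
    rfl
  rw [hW, hA]
  exact Real.sum_mul_le_sqrt_mul_sqrt _ _ _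

theorem frob_projBall_le {R : ℝ} (hR : 0 ≤ R) (A : Matrix α β ℝ) : frob (projBall R A) ≤ R := by
  unfold projBall
  split_ifs with h
  · exact h
  · rw [frob_smul, abs_of_nonneg (div_nonneg hR (frob_nonneg A)),
      div_mul_cancel₀ _ (hR.trans_lt (not_le.1 h)).ne']

theorem frob_projBall_sub_le {R : ℝ} {B : Matrix α β ℝ} (hB : frob B ≤ R) (A : Matrix α β ℝ) :
    frob (projBall R A - B) ≤ frob (A - B) := by
  unfold projBall
  split_ifs with h
  · exact le_rfl
  · simp only [frob_eq_norm_flatten, map_sub, map_smul] at hB h ⊢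
    exact norm_div_norm_smul_sub_le hB (not_le.1 h)

end Frobenius

section SpectralNorm

variable {α β γ : Type*} [Fintype α] [Fintype β] [Fintype γ]

theorem specNorm_bddAbove (A : Matrix α β ℝ) :
    BddAbove {r | ∃ v : β → ℝ, vecNorm v ≤ 1 ∧ r = vecNorm (A *ᵥ v)} := by
  classical
  set T := LinearMap.toContinuousLinearMap (Matrix.toLpLin 2 2 A)
  refine ⟨‖T‖, ?_⟩
  rintro r ⟨v, hv, rfl⟩
  have := T.le_opNorm (WithLp.toLp 2 v)
  rw [vecNorm_eq_norm] at hv ⊢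
  simp only [LinearMap.coe_toContinuousLinearMap', toLpLin_toLp, toLin'_apply, T] at this
  exact this.trans (mul_le_of_le_one_right (norm_nonneg _) hv)

theorem specNorm_nonneg (A : Matrix α β ℝ) : 0 ≤ specNorm A :=
  le_csSup (specNorm_bddAbove A) ⟨0, by simp [vecNorm], by simp [vecNorm]⟩

theorem vecNorm_mulVec_le (A : Matrix α β ℝ) (v : β → ℝ) :
    vecNorm (A *ᵥ v) ≤ specNorm A * vecNorm v := by
  by_cases hv : vecNorm v = 0
  · simp [vecNorm_eq_zero.1 hv, vecNorm]
  have hpos : 0 < vecNorm v := (vecNorm_nonneg v).lt_of_ne' hv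
  have hunit : vecNorm ((vecNorm v)⁻¹ • v) ≤ 1 := by
    rw [vecNorm_smul, abs_inv, abs_of_pos hpos, inv_mul_cancel₀ hv]
  have := le_csSup (specNorm_bddAbove A) ⟨_, hunit, rfl⟩
  rwa [mulVec_smul, vecNorm_smul, abs_inv, abs_of_pos hpos, inv_mul_le_iff₀ hpos, mul_comm] at this

theorem frob_mul_le (A : Matrix α β ℝ) (B : Matrix β γ ℝ) :
    frob (A * B) ≤ specNorm A * frob B := by
  rw [← sq_le_sq₀ (frob_nonneg _) (mul_nonneg (specNorm_nonneg A) (frob_nonneg B)), mul_pow,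
    frob_sq, frob_sq, mul_sum]
  refine sum_le_sum fun j _ => ?_
  rw [← mul_pow]
  have : (A * B)ᵀ j = A *ᵥ Bᵀ j := by ext i; simp [mul_apply, mulVec, dotProduct]
  rw [this]
  exact pow_le_pow_left₀ (vecNorm_nonneg _) (vecNorm_mulVec_le A _) 2

theorem specNorm_mul_frob_div_specNorm [DecidableEq β] (A : Matrix α β ℝ) :
    specNorm A * (frob A / specNorm A) = frob A := by
  by_cases h : specNorm A = 0
  · have : frob A ≤ 0 := by
      simpa only [Matrix.mul_one, h, zero_mul] using frob_mul_le A (1 : Matrix β β ℝ)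
    rw [h, le_antisymm this (frob_nonneg A)]
    simp
  · exact mul_div_cancel₀ _ h

end SpectralNorm

section Sampling

variable {α β γ : Type*} [Fintype γ] [DecidableEq γ]

theorem mul_diagonal_mul_eq_sum (W : Matrix α γ ℝ) (d : γ → ℝ) (A : Matrix γ β ℝ) :
    W * diagonal d * A = ∑ l, d l • vecMulVec (Wᵀ l) (A l) := by
  ext i j
  rw [mul_apply]
  simp only [mul_diagonal, Matrix.sum_apply, Matrix.smul_apply, vecMulVec_apply,
    transpose_apply, smul_eq_mul]
  exact sum_congr rfl fun l _ => by ring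

theorem mul_diagonal_card_fiber_mul_eq_sum (W : Matrix α γ ℝ) (A : Matrix γ β ℝ) (w : γ → ℝ)
    {k : ℕ} (s : Fin k → γ) :
    W * diagonal (fun l => #{t | s t = l} * w l) * A =
      ∑ t, w (s t) • vecMulVec (Wᵀ (s t)) (A (s t)) := by
  rw [mul_diagonal_mul_eq_sum, ← sum_fiberwise' univ s fun l => w l • vecMulVec (Wᵀ l) (A l)]
  simp only [sum_const, mul_smul, Nat.cast_smul_eq_nsmul]

theorem card_diagonal_card_fiber_ne_zero_le (w : γ → ℝ) {k : ℕ} (s : Fin k → γ) :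
    #{l | (#{t | s t = l} : ℝ) * w l ≠ 0} ≤ k := by
  calc #{l | (#{t | s t = l} : ℝ) * w l ≠ 0} ≤ #(univ.image s) := by
        refine card_le_card fun l hl => ?_
        have hfiber := Nat.cast_ne_zero.1 (left_ne_zero_of_mul (mem_filter.1 hl).2)
        obtain ⟨t, ht⟩ := card_ne_zero.1 hfiber
        exact mem_image.2 ⟨t, mem_univ t, (mem_filter.1 ht).2⟩
    _ ≤ k := card_image_le.trans (card_fin k).le

theorem exists_diagonal_sampling [Fintype α] [Fintype β] (W : Matrix α γ ℝ) (A : Matrix γ β ℝ)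
    {k : ℕ} (hk : 1 ≤ k) :
    ∃ M : Matrix γ γ ℝ, M.IsDiag ∧ #{l | M l l ≠ 0} ≤ k ∧
      frob (W * A - W * M * A) ≤ frob W * frob A / √k := by
  set V : γ → Matrix α β ℝ := fun l => vecMulVec (Wᵀ l) (A l)
  set C := ∑ l, frob (V l)
  have hCle : C ≤ frob W * frob A := by
    simpa only [C, V, frob_vecMulVec] using sum_vecNorm_mul_le_frob_mul_frob W A
  have hWA : W * A = ∑ l, V l := by simpa using mul_diagonal_mul_eq_sum W 1 A
  have hbound : 0 ≤ frob W * frob A / √k :=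
    div_nonneg (mul_nonneg (frob_nonneg W) (frob_nonneg A)) (Real.sqrt_nonneg _)
  rcases (show 0 ≤ C from sum_nonneg fun l _ => frob_nonneg _).eq_or_lt with hC | hC
  · refine ⟨0, isDiag_zero, by simp, ?_⟩
    calc frob (W * A - W * (0 : Matrix γ γ ℝ) * A) ≤ C := by
          simpa only [Matrix.mul_zero, Matrix.zero_mul, sub_zero, hWA] using frob_sum_le univ V
      _ ≤ frob W * frob A / √k := hC ▸ hbound
  obtain ⟨s, hs⟩ := exists_norm_importance_sum_sub_sq_le (fun l => flatten (V l))
    (by simpa only [C, frob_eq_norm_flatten] using hC) k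
  simp only [← frob_eq_norm_flatten, ← map_smul, ← map_sum, ← map_sub, ← hWA] at hs
  refine ⟨diagonal fun l => #{t | s t = l} * ((k : ℝ)⁻¹ * (C / frob (V l))), isDiag_diagonal _,
    by simpa only [diagonal_apply_eq] using card_diagonal_card_fiber_ne_zero_le _ s, ?_⟩
  have hk0 : (0 : ℝ) < k := by exact_mod_cast hk
  have herr : W * A - ∑ t, ((k : ℝ)⁻¹ * (C / frob (V (s t)))) • V (s t) =
      -(k : ℝ)⁻¹ • (∑ t, (C / frob (V (s t))) • V (s t) - (k : ℝ) • (W * A)) := by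
    rw [smul_sub, smul_smul, neg_mul, inv_mul_cancel₀ hk0.ne', smul_sum]
    simp only [smul_smul, neg_mul, neg_smul, sum_neg_distrib, one_smul]
    abel
  have hsum : frob (∑ t, (C / frob (V (s t))) • V (s t) - (k : ℝ) • (W * A)) ≤ √k * C := by
    rw [← sq_le_sq₀ (frob_nonneg _) (by positivity), mul_pow, Real.sq_sqrt hk0.le]
    exact hs
  rw [mul_diagonal_card_fiber_mul_eq_sum, herr, frob_smul, abs_neg, abs_inv, Nat.abs_cast]
  calc (k : ℝ)⁻¹ * frob _ ≤ (k : ℝ)⁻¹ * (√k * C) := by gcongr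
    _ = C / √k := by
      field_simp
      exact Real.sq_sqrt hk0.le
    _ ≤ frob W * frob A / √k := by gcongr

end Sampling

section Network

variable {α β γ δ ε : Type*} [Fintype α] [Fintype β] [Fintype γ] [Fintype δ] [Fintype ε]

theorem frob_apply_le_of_map_zero {σ : Matrix α β ℝ → Matrix δ ε ℝ}
    (hσ : ∀ A B, frob (σ A - σ B) ≤ frob (A - B)) (hσ0 : σ 0 = 0) (A : Matrix α β ℝ) :
    frob (σ A) ≤ frob A := by
  simpa only [hσ0, sub_zero] using hσ A 0

theorem frob_sub_projBall_le {σ : Matrix α β ℝ → Matrix δ ε ℝ}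
    (hσ : ∀ A B, frob (σ A - σ B) ≤ frob (A - B)) (W : Matrix α γ ℝ) (M : Matrix γ γ ℝ)
    {X H : Matrix γ β ℝ} {R : ℝ} (hR : frob (σ (W * X)) ≤ R) :
    frob (σ (W * X) - projBall R (σ (W * M * H))) ≤
      frob (W * H - W * M * H) + specNorm W * frob (X - H) := by
  calc frob (σ (W * X) - projBall R (σ (W * M * H)))
      = frob (projBall R (σ (W * M * H)) - σ (W * X)) := frob_sub_comm _ _
    _ ≤ frob (σ (W * M * H) - σ (W * X)) := frob_projBall_sub_le hR _
    _ ≤ frob (W * M * H - W * X) := hσ _ _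
    _ = frob ((W * H - W * M * H) + W * (X - H)) := by
        rw [frob_sub_comm, Matrix.mul_sub]
        abel_nf
    _ ≤ frob (W * H - W * M * H) + specNorm W * frob (X - H) :=
        (frob_add_le _ _).trans (add_le_add le_rfl (frob_mul_le W (X - H)))

theorem frob_sub_projBall_le_of_sampling [DecidableEq γ] {σ : Matrix α β ℝ → Matrix δ ε ℝ}
    (hσ : ∀ A B, frob (σ A - σ B) ≤ frob (A - B)) {W : Matrix α γ ℝ} {M : Matrix γ γ ℝ}
    {X H : Matrix γ β ℝ} {R R' : ℝ} {k : ℕ} (hR' : frob (σ (W * X)) ≤ R') (hR : 0 ≤ R)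
    (hH : frob H ≤ R) (hM : frob (W * H - W * M * H) ≤ frob W * frob H / √k) :
    frob (σ (W * X) - projBall R' (σ (W * M * H))) ≤
      specNorm W * (R * (2 / √k * (frob W / specNorm W)) + frob (X - H)) := by
  have hsample : frob (W * H - W * M * H) ≤ specNorm W * (R * (2 / √k * (frob W / specNorm W))) :=
    calc frob (W * H - W * M * H) ≤ frob W * R / √k := hM.trans (by gcongr; exact frob_nonneg W)
      _ ≤ 2 * (frob W * R) / √k :=
        div_le_div_of_nonneg_right (by linarith [mul_nonneg (frob_nonneg W) hR])
          (Real.sqrt_nonneg _)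
      _ = specNorm W * (R * (2 / √k * (frob W / specNorm W))) := by
        linear_combination (-(2 / √k * R)) * specNorm_mul_frob_div_specNorm W
  calc frob (σ (W * X) - projBall R' (σ (W * M * H)))
      ≤ frob (W * H - W * M * H) + specNorm W * frob (X - H) := frob_sub_projBall_le hσ W M hR'
    _ ≤ specNorm W * (R * (2 / √k * (frob W / specNorm W))) + specNorm W * frob (X - H) := by
        gcongr
    _ = _ := by ring

theorem frob_forward_le {σ : ℕ → Matrix α β ℝ → Matrix α β ℝ}
    (hσ : ∀ j A B, frob (σ j A - σ j B) ≤ frob (A - B)) (hσ0 : ∀ j, σ j 0 = 0)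
    {W : ℕ → Matrix α α ℝ} {Y : ℕ → Matrix α β ℝ} (hY : ∀ j, Y (j + 1) = σ j (W j * Y j))
    (j : ℕ) : frob (Y j) ≤ frob (Y 0) * ∏ i ∈ range j, specNorm (W i) := by
  induction j with
  | zero => simp
  | succ j ih =>
    calc frob (Y (j + 1)) ≤ frob (W j * Y j) := hY j ▸ frob_apply_le_of_map_zero (hσ j) (hσ0 j) _
      _ ≤ specNorm (W j) * frob (Y j) := frob_mul_le _ _
      _ ≤ specNorm (W j) * (frob (Y 0) * ∏ i ∈ range j, specNorm (W i)) := by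
        gcongr; exact specNorm_nonneg _
      _ = frob (Y 0) * ∏ i ∈ range (j + 1), specNorm (W i) := by rw [prod_range_succ]; ring

end Network

theorem le_mul_prod_mul_sum_of_le {e s ε : ℕ → ℝ} {R₀ : ℝ} (hs : ∀ j, 0 ≤ s j) (he0 : e 0 ≤ 0)
    (he : ∀ j, e (j + 1) ≤ s j * (R₀ * (∏ i ∈ range j, s i) * ε j + e j)) (j : ℕ) :
    e j ≤ R₀ * (∏ i ∈ range j, s i) * ∑ i ∈ range j, ε i := by
  induction j with
  | zero => simpa using he0
  | succ j ih =>
    calc e (j + 1) ≤ s j * (R₀ * (∏ i ∈ range j, s i) * ε j + e j) := he j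
      _ ≤ s j * (R₀ * (∏ i ∈ range j, s i) * ε j +
            R₀ * (∏ i ∈ range j, s i) * ∑ i ∈ range j, ε i) := by gcongr; exact hs j
      _ = R₀ * (∏ i ∈ range (j + 1), s i) * ∑ i ∈ range (j + 1), ε i := by
        rw [prod_range_succ, sum_range_succ]; ring

theorem exists_seq_of_forall_exists {S T : Type*} (x₀ : S) (f : ℕ → S → T → S)
    {P : ℕ → S → T → Prop} (hP : ∀ j x, ∃ y, P j x y) :
    ∃ (y : ℕ → T) (x : ℕ → S), x 0 = x₀ ∧ ∀ j, x (j + 1) = f j (x j) (y j) ∧ P j (x j) (y j) := by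
  choose g hg using hP
  let x : ℕ → S := fun j => Nat.rec x₀ (fun j xj => f j xj (g j xj)) j
  exact ⟨fun j => g j (x j), x, rfl, fun j => ⟨rfl, hg _ _⟩⟩

open Classical in
/-- Network sparsification error via importance-sampled matrix multiplication. -/
theorem network_sparsification {m n : ℕ} (L : ℕ)
    (X : Matrix (Fin n) (Fin m) ℝ)
    (W : ℕ → Matrix (Fin m) (Fin m) ℝ)
    (σ : ℕ → Matrix (Fin m) (Fin n) ℝ → Matrix (Fin m) (Fin n) ℝ)
    (hσ0 : ∀ i, σ i 0 = 0)
    (hσlip : ∀ i A B, frob (σ i A - σ i B) ≤ frob (A - B))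
    (k : ℕ → ℕ) (hk : ∀ i, 1 ≤ k i) :
    ∃ M : ℕ → Matrix (Fin m) (Fin m) ℝ,
      (∀ i, (M i).IsDiag) ∧
      (∀ i, (Finset.univ.filter fun l => M i l l ≠ 0).card ≤ k i) ∧
      ∀ Xseq hatX : ℕ → Matrix (Fin m) (Fin n) ℝ,
        Xseq 0 = Xᵀ →
        (∀ j, Xseq (j + 1) = σ j (W j * Xseq j)) →
        hatX 0 = Xᵀ →
        (∀ j, hatX (j + 1) =
          projBall (frob X * ∏ i ∈ Finset.range (j + 1), specNorm (W i))
            (σ j (W j * M j * hatX j))) →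
        frob (Xseq L - hatX L) ≤
          frob X * (∏ i ∈ Finset.range L, specNorm (W i)) *
            ∑ i ∈ Finset.range L, (2 / Real.sqrt (k i)) * (frob (W i) / specNorm (W i)) := by
  set R : ℕ → ℝ := fun j => frob X * ∏ i ∈ range j, specNorm (W i)
  obtain ⟨M, H, hH0, hH⟩ := exists_seq_of_forall_exists Xᵀ
    (fun j A M => projBall (R (j + 1)) (σ j (W j * M * A)))
    (fun j A => exists_diagonal_sampling (W j) A (hk j))
  refine ⟨M, fun j => (hH j).2.1, fun j => (hH j).2.2.1, ?_⟩
  intro Xseq hatX hX0 hX hatX0 hatX_succ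
  have hatX_eq : ∀ j, hatX j = H j := by
    intro j
    induction j with
    | zero => rw [hatX0, hH0]
    | succ j ih => rw [hatX_succ, ih, (hH j).1]
  have hR0 : ∀ j, 0 ≤ R j := fun j =>
    mul_nonneg (frob_nonneg X) (prod_nonneg fun i _ => specNorm_nonneg _)
  have hXR : ∀ j, frob (Xseq j) ≤ R j := fun j => by
    simpa only [hX0, frob_transpose] using frob_forward_le hσlip hσ0 hX j
  have hHR : ∀ j, frob (H j) ≤ R j := by
    rintro (_ | j)
    · simp [R, hH0, frob_transpose]
    · rw [(hH j).1]
      exact frob_projBall_le (hR0 _) _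
  rw [hatX_eq]
  refine le_mul_prod_mul_sum_of_le (e := fun j => frob (Xseq j - H j))
    (fun j => specNorm_nonneg _) (by simp [hX0, hH0, frob]) (fun j => ?_) L
  rw [hX, (hH j).1]
  exact frob_sub_projBall_le_of_sampling (hσlip j) (hX j ▸ hXR (j + 1)) (hR0 j) (hHR j) (hH j).2.2.2
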